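/- The recursively defined map 𝐒 is invertible as an ℝ[[λ]]-linear endomorphism of V[[λ]] and satisfies ω(𝐒(φ), 𝐒(ψ)) = ω̂(φ, ψ) for all φ, ψ ∈ V[[λ]]; in particular 𝐒 is a symplectic map from (V[[λ]], ω̂) to (V[[λ]], ω). -/

import Mathlib

open Finset

noncomputable section

namespace NCQFT

theorem sum_ad_assoc {M : Type*} [AddCommMonoid M] (n : ℕ) (G : ℕ → ℕ → ℕ → M) :
    ∑ p ∈ antidiagonal n, ∑ q ∈ antidiagonal p.2, G p.1 q.1 q.2
      = ∑ p ∈ antidiagonal n, ∑ q ∈ antidiagonal p.1, G q.1 q.2 p.2 := by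
  rw [Finset.sum_sigma', Finset.sum_sigma']
  refine Finset.sum_nbij' (fun x => ⟨(x.1.1 + x.2.1, x.2.2), (x.1.1, x.2.1)⟩)
    (fun x => ⟨(x.2.1, x.2.2 + x.1.2), (x.2.2, x.1.2)⟩) ?_ ?_ ?_ ?_ ?_
  · rintro ⟨⟨a, k⟩, b, c⟩ h
    simp only [Finset.mem_sigma, Finset.HasAntidiagonal.mem_antidiagonal] at h ⊢
    refine ⟨by omega, ?_⟩
    try trivial
    try omega
  · rintro ⟨⟨i, c⟩, a, b⟩ h
    simp only [Finset.mem_sigma, Finset.HasAntidiagonal.mem_antidiagonal] at h ⊢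
    refine ⟨by omega, ?_⟩
    try trivial
    try omega
  · rintro ⟨⟨a, k⟩, b, c⟩ h
    simp only [Finset.mem_sigma, Finset.HasAntidiagonal.mem_antidiagonal] at h
    obtain ⟨-, h2⟩ := h
    subst h2
    rfl
  · rintro ⟨⟨i, c⟩, a, b⟩ h
    simp only [Finset.mem_sigma, Finset.HasAntidiagonal.mem_antidiagonal] at h
    obtain ⟨-, h2⟩ := h
    subst h2
    rfl
  · rintro ⟨⟨a, k⟩, b, c⟩ h
    rfl

theorem sum_ad_swap {M : Type*} [AddCommMonoid M] (n : ℕ) (G : ℕ → ℕ → ℕ → M) :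
    ∑ p ∈ antidiagonal n, ∑ q ∈ antidiagonal p.2, G p.1 q.1 q.2
      = ∑ p ∈ antidiagonal n, ∑ q ∈ antidiagonal p.2, G q.1 p.1 q.2 := by
  rw [Finset.sum_sigma', Finset.sum_sigma']
  refine Finset.sum_nbij' (fun x => ⟨(x.2.1, x.1.1 + x.2.2), (x.1.1, x.2.2)⟩)
    (fun x => ⟨(x.2.1, x.1.1 + x.2.2), (x.1.1, x.2.2)⟩) ?_ ?_ ?_ ?_ ?_
  · rintro ⟨⟨a, k⟩, b, c⟩ h
    simp only [Finset.mem_sigma, Finset.HasAntidiagonal.mem_antidiagonal] at h ⊢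
    refine ⟨by omega, ?_⟩
    try trivial
    try omega
  · rintro ⟨⟨b, k⟩, a, c⟩ h
    simp only [Finset.mem_sigma, Finset.HasAntidiagonal.mem_antidiagonal] at h ⊢
    refine ⟨by omega, ?_⟩
    try trivial
    try omega
  · rintro ⟨⟨a, k⟩, b, c⟩ h
    simp only [Finset.mem_sigma, Finset.HasAntidiagonal.mem_antidiagonal] at h
    obtain ⟨-, h2⟩ := h
    subst h2
    rfl
  · rintro ⟨⟨b, k⟩, a, c⟩ h
    simp only [Finset.mem_sigma, Finset.HasAntidiagonal.mem_antidiagonal] at h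
    obtain ⟨-, h2⟩ := h
    subst h2
    rfl
  · rintro ⟨⟨a, k⟩, b, c⟩ h
    rfl

variable {K : Type*} [CommRing K]

/-- The Cauchy-product scalar multiplication of `K[[λ]]` on `V[[λ]] = (ℕ → V)`. -/
def fpsSMul {V : Type*} [AddCommGroup V] [Module K V] (c : PowerSeries K) (v : ℕ → V) :
    ℕ → V :=
  fun n => ∑ p ∈ antidiagonal n, PowerSeries.coeff p.1 c • v p.2

theorem fpsSMul_one {V : Type*} [AddCommGroup V] [Module K V] (v : ℕ → V) :
    fpsSMul (1 : PowerSeries K) v = v := by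
  funext n
  rw [fpsSMul, Finset.sum_eq_single (0, n)]
  · simp
  · rintro ⟨i, j⟩ hmem hne
    rw [PowerSeries.coeff_one, if_neg, zero_smul]
    rintro rfl
    apply hne
    simp only [Finset.HasAntidiagonal.mem_antidiagonal] at hmem
    simp [← hmem]
  · intro h
    exact absurd (by simp) h

theorem fpsSMul_mul {V : Type*} [AddCommGroup V] [Module K V] (c d : PowerSeries K)
    (v : ℕ → V) : fpsSMul (c * d) v = fpsSMul c (fpsSMul d v) := by
  funext n
  rw [fpsSMul]
  calc ∑ p ∈ antidiagonal n, PowerSeries.coeff p.1 (c * d) • v p.2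
      = ∑ p ∈ antidiagonal n, ∑ q ∈ antidiagonal p.1,
          (PowerSeries.coeff q.1 c * PowerSeries.coeff q.2 d) • v p.2 := by
        refine Finset.sum_congr rfl fun p _ => ?_
        rw [PowerSeries.coeff_mul, Finset.sum_smul]
    _ = ∑ p ∈ antidiagonal n, ∑ q ∈ antidiagonal p.2,
          (PowerSeries.coeff p.1 c * PowerSeries.coeff q.1 d) • v q.2 :=
        (sum_ad_assoc n fun a b e => (PowerSeries.coeff a c * PowerSeries.coeff b d) • v e).symm
    _ = fpsSMul c (fpsSMul d v) n := by
        rw [fpsSMul]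
        refine Finset.sum_congr rfl fun p _ => ?_
        rw [fpsSMul, Finset.smul_sum]
        exact Finset.sum_congr rfl fun q _ => (mul_smul _ _ _)

instance fpsModule {V : Type*} [AddCommGroup V] [Module K V] :
    Module (PowerSeries K) (ℕ → V) where
  smul := fpsSMul
  one_smul := fpsSMul_one
  mul_smul := fpsSMul_mul
  smul_zero c := by
    funext n
    show fpsSMul c (0 : ℕ → V) n = 0
    simp [fpsSMul]
  smul_add c u v := by
    funext n
    show fpsSMul c (u + v) n = fpsSMul c u n + fpsSMul c v n
    simp [fpsSMul, Finset.sum_add_distrib, smul_add]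
  add_smul c d v := by
    funext n
    show fpsSMul (c + d) v n = fpsSMul c v n + fpsSMul d v n
    simp [fpsSMul, Finset.sum_add_distrib, add_smul]
  zero_smul v := by
    funext n
    show fpsSMul (0 : PowerSeries K) v n = 0
    simp [fpsSMul]

theorem fps_smul_apply {V : Type*} [AddCommGroup V] [Module K V]
    (c : PowerSeries K) (v : ℕ → V) (n : ℕ) :
    (c • v) n = ∑ p ∈ antidiagonal n, PowerSeries.coeff p.1 c • v p.2 := rfl

/-- The `K[[λ]]`-linear map `V[[λ]] → W[[λ]]` induced by a family of `K`-linear maps,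
`F_⋆ = Σ λⁿ F_(n)`. -/
def starMap {V W : Type*} [AddCommGroup V] [Module K V] [AddCommGroup W] [Module K W]
    (F : ℕ → V →ₗ[K] W) : (ℕ → V) →ₗ[PowerSeries K] (ℕ → W) where
  toFun u := fun n => ∑ p ∈ antidiagonal n, F p.1 (u p.2)
  map_add' u v := by
    funext n
    simp [Finset.sum_add_distrib]
  map_smul' c u := by
    funext n
    show ∑ p ∈ antidiagonal n, F p.1 ((c • u) p.2)
        = (c • fun m => ∑ q ∈ antidiagonal m, F q.1 (u q.2)) n
    simp only [fps_smul_apply, map_sum, map_smul, Finset.smul_sum]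
    exact sum_ad_swap n fun a b e => PowerSeries.coeff b c • F a (u e)

theorem starMap_apply {V W : Type*} [AddCommGroup V] [Module K V] [AddCommGroup W] [Module K W]
    (F : ℕ → V →ₗ[K] W) (u : ℕ → V) (n : ℕ) :
    starMap F u n = ∑ p ∈ antidiagonal n, F p.1 (u p.2) := rfl

/-- The coefficientwise application of a single `K`-linear map, as a `K[[λ]]`-linear map. -/
def cwMap {V W : Type*} [AddCommGroup V] [Module K V] [AddCommGroup W] [Module K W]
    (F : V →ₗ[K] W) : (ℕ → V) →ₗ[PowerSeries K] (ℕ → W) where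
  toFun u := fun n => F (u n)
  map_add' u v := by funext n; simp
  map_smul' c u := by
    funext n
    show F ((c • u) n) = (c • fun m => F (u m)) n
    simp only [fps_smul_apply, map_sum, map_smul]

theorem cwMap_apply {V W : Type*} [AddCommGroup V] [Module K V] [AddCommGroup W] [Module K W]
    (F : V →ₗ[K] W) (u : ℕ → V) (n : ℕ) : cwMap F u n = F (u n) := rfl



variable {V : Type*} [AddCommGroup V] [Module ℝ V]

/-- The recursively defined coefficients of the formal square root `𝐒` of `K = Σ λⁿ K_(n)`:
`S_(0) = id`, `S_(1) = ½ K_(1)`, `S_(n) = ½ (K_(n) − Σ_{m=1}^{n−1} S_(m) ∘ S_(n−m))`, `n ≥ 2`. -/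
def sqrtCoef (Kf : ℕ → V →ₗ[ℝ] V) : ℕ → V →ₗ[ℝ] V
  | 0 => LinearMap.id
  | 1 => (1 / 2 : ℝ) • Kf 1
  | n + 2 =>
    (1 / 2 : ℝ) • (Kf (n + 2) -
      ∑ m ∈ (Finset.Ioo 0 (n + 2)).attach,
        sqrtCoef Kf m.1 ∘ₗ sqrtCoef Kf (n + 2 - m.1))
  decreasing_by
  · have := m.2; simp only [Finset.mem_Ioo] at this; omega
  · have := m.2; simp only [Finset.mem_Ioo] at this; omega

/-- The `ℝ[[λ]]`-bilinear extension of a bilinear form `ω : V × V → ℝ` to `V[[λ]]`. -/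
def omegaSeries (ω : V →ₗ[ℝ] V →ₗ[ℝ] ℝ) (u v : ℕ → V) : PowerSeries ℝ :=
  PowerSeries.mk fun n => ∑ p ∈ antidiagonal n, ω (u p.1) (v p.2)

/-! ### Auxiliary lemmas for statement 7 -/

theorem sum_ad_swap2 {M : Type*} [AddCommMonoid M] (n : ℕ) (f : ℕ → ℕ → M) :
    ∑ q ∈ antidiagonal n, f q.1 q.2 = ∑ q ∈ antidiagonal n, f q.2 q.1 := by
  conv_lhs => rw [← Finset.HasAntidiagonal.map_swap_antidiagonal (n := n), Finset.sum_map]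
  rfl

theorem starMap_comp {W : Type*} [AddCommGroup W] [Module ℝ W]
    (F G : ℕ → W →ₗ[ℝ] W) :
    starMap F ∘ₗ starMap G
      = starMap (fun n => ∑ p ∈ antidiagonal n, F p.1 ∘ₗ G p.2) := by
  apply LinearMap.ext; intro u
  funext n
  show starMap F (starMap G u) n = _
  rw [starMap_apply, starMap_apply]
  calc ∑ p ∈ antidiagonal n, F p.1 (starMap G u p.2)
      = ∑ p ∈ antidiagonal n, ∑ q ∈ antidiagonal p.2, F p.1 (G q.1 (u q.2)) := by
        refine Finset.sum_congr rfl fun p _ => ?_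
        rw [starMap_apply, map_sum]
    _ = ∑ p ∈ antidiagonal n, ∑ q ∈ antidiagonal p.1, F q.1 (G q.2 (u p.2)) :=
        sum_ad_assoc n fun a b c => F a (G b (u c))
    _ = ∑ p ∈ antidiagonal n,
          (∑ q ∈ antidiagonal p.1, F q.1 ∘ₗ G q.2) (u p.2) := by
        refine Finset.sum_congr rfl fun p _ => ?_
        rw [LinearMap.sum_apply]
        rfl

/-- The identity coefficient family `e_(0) = id`, `e_(n) = 0` for `n ≥ 1`. -/
def eFam (W : Type*) [AddCommGroup W] [Module ℝ W] : ℕ → W →ₗ[ℝ] W :=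
  fun n => if n = 0 then LinearMap.id else 0

theorem starMap_eFam {W : Type*} [AddCommGroup W] [Module ℝ W] :
    starMap (eFam W) = LinearMap.id := by
  apply LinearMap.ext; intro u
  funext n
  show ∑ p ∈ antidiagonal n, eFam W p.1 (u p.2) = u n
  rw [Finset.sum_eq_single (0, n)]
  · simp [eFam]
  · rintro ⟨i, j⟩ hmem hne
    have hi : i ≠ 0 := by
      rintro rfl
      apply hne
      simp only [Finset.HasAntidiagonal.mem_antidiagonal] at hmem
      simp [← hmem]
    simp [eFam, hi]
  · intro h; exact absurd (by simp) h

/-- Right convolution inverse of a family with invertible (identity) zeroth term. -/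
def invR {W : Type*} [AddCommGroup W] [Module ℝ W] (F : ℕ → W →ₗ[ℝ] W) :
    ℕ → W →ₗ[ℝ] W
  | 0 => LinearMap.id
  | n + 1 =>
    - ∑ b ∈ (Finset.range (n + 1)).attach, F (n + 1 - b.1) ∘ₗ invR F b.1
  decreasing_by have := b.2; simp only [Finset.mem_range] at this; omega

/-- Left convolution inverse of a family with invertible (identity) zeroth term. -/
def invL {W : Type*} [AddCommGroup W] [Module ℝ W] (F : ℕ → W →ₗ[ℝ] W) :
    ℕ → W →ₗ[ℝ] W
  | 0 => LinearMap.id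
  | n + 1 =>
    - ∑ b ∈ (Finset.range (n + 1)).attach, invL F b.1 ∘ₗ F (n + 1 - b.1)
  decreasing_by have := b.2; simp only [Finset.mem_range] at this; omega

theorem conv_invR {W : Type*} [AddCommGroup W] [Module ℝ W]
    (F : ℕ → W →ₗ[ℝ] W) (hF0 : F 0 = LinearMap.id) (n : ℕ) :
    ∑ p ∈ antidiagonal n, F p.1 ∘ₗ invR F p.2 = eFam W n := by
  rcases n with _ | n
  · simp [Finset.Nat.antidiagonal_zero, eFam, hF0, invR]
  · rw [Finset.Nat.sum_antidiagonal_eq_sum_range_succ_mk, Finset.sum_range_succ']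
    have h0 : F 0 ∘ₗ invR F (n + 1 - 0) = invR F (n + 1) := by
      rw [Nat.sub_zero, hF0, LinearMap.id_comp]
    have h1 : invR F (n + 1)
        = - ∑ b ∈ Finset.range (n + 1), F (n + 1 - b) ∘ₗ invR F b := by
      rw [invR]
      congr 1
      exact Finset.sum_attach (Finset.range (n + 1))
        (fun b => F (n + 1 - b) ∘ₗ invR F b)
    have h2 : ∑ b ∈ Finset.range (n + 1), F (n + 1 - b) ∘ₗ invR F b
        = ∑ k ∈ Finset.range (n + 1), F (k + 1) ∘ₗ invR F (n + 1 - (k + 1)) := by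
      rw [← Finset.sum_range_reflect]
      refine Finset.sum_congr rfl fun k hk => ?_
      simp only [Finset.mem_range] at hk
      have e1 : n + 1 - 1 - k = n - k := by omega
      have e2 : n + 1 - (n - k) = k + 1 := by omega
      have e3 : n + 1 - (k + 1) = n - k := by omega
      rw [e1, e2, e3]
    rw [h0, h1, h2]
    simp [eFam]

theorem conv_invL {W : Type*} [AddCommGroup W] [Module ℝ W]
    (F : ℕ → W →ₗ[ℝ] W) (hF0 : F 0 = LinearMap.id) (n : ℕ) :
    ∑ p ∈ antidiagonal n, invL F p.1 ∘ₗ F p.2 = eFam W n := by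
  rcases n with _ | n
  · simp [Finset.Nat.antidiagonal_zero, eFam, hF0, invL]
  · rw [Finset.Nat.sum_antidiagonal_eq_sum_range_succ_mk, Finset.sum_range_succ]
    have h0 : invL F (n + 1) ∘ₗ F (n + 1 - (n + 1)) = invL F (n + 1) := by
      rw [Nat.sub_self, hF0, LinearMap.comp_id]
    have h1 : invL F (n + 1)
        = - ∑ b ∈ Finset.range (n + 1), invL F b ∘ₗ F (n + 1 - b) := by
      rw [invL]
      congr 1
      exact Finset.sum_attach (Finset.range (n + 1))
        (fun b => invL F b ∘ₗ F (n + 1 - b))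
    rw [h0, h1]
    simp [eFam]

theorem starMap_inverses {W : Type*} [AddCommGroup W] [Module ℝ W]
    (F : ℕ → W →ₗ[ℝ] W) (hF0 : F 0 = LinearMap.id) :
    starMap F ∘ₗ starMap (invR F) = LinearMap.id ∧
    starMap (invR F) ∘ₗ starMap F = LinearMap.id := by
  have hR : starMap F ∘ₗ starMap (invR F) = LinearMap.id := by
    rw [starMap_comp]
    have he : (fun n => ∑ p ∈ antidiagonal n, F p.1 ∘ₗ invR F p.2) = eFam W := by
      funext n; exact conv_invR F hF0 n
    rw [he, starMap_eFam]
  have hL : starMap (invL F) ∘ₗ starMap F = LinearMap.id := by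
    rw [starMap_comp]
    have he : (fun n => ∑ p ∈ antidiagonal n, invL F p.1 ∘ₗ F p.2) = eFam W := by
      funext n; exact conv_invL F hF0 n
    rw [he, starMap_eFam]
  have heq : starMap (invL F) = starMap (invR F) := by
    calc starMap (invL F) = starMap (invL F) ∘ₗ LinearMap.id :=
          (LinearMap.comp_id _).symm
      _ = starMap (invL F) ∘ₗ (starMap F ∘ₗ starMap (invR F)) := by rw [hR]
      _ = (starMap (invL F) ∘ₗ starMap F) ∘ₗ starMap (invR F) := by
          rw [LinearMap.comp_assoc]
      _ = starMap (invR F) := by rw [hL, LinearMap.id_comp]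
  exact ⟨hR, heq ▸ hL⟩

theorem sqrtCoef_zero (Kf : ℕ → V →ₗ[ℝ] V) : sqrtCoef Kf 0 = LinearMap.id := by
  simp only [sqrtCoef]

theorem sqrtCoef_succ_succ (Kf : ℕ → V →ₗ[ℝ] V) (n : ℕ) :
    sqrtCoef Kf (n + 2) = (1 / 2 : ℝ) • (Kf (n + 2) -
      ∑ m ∈ Finset.Ioo 0 (n + 2), sqrtCoef Kf m ∘ₗ sqrtCoef Kf (n + 2 - m)) := by
  rw [sqrtCoef]
  congr 2
  exact Finset.sum_attach (Finset.Ioo 0 (n + 2))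
    (fun m => sqrtCoef Kf m ∘ₗ sqrtCoef Kf (n + 2 - m))

/-- `K = S ∘ S` at the level of coefficient families. -/
theorem sq_conv (Kf : ℕ → V →ₗ[ℝ] V) (hK0 : Kf 0 = LinearMap.id) (n : ℕ) :
    ∑ p ∈ antidiagonal n, sqrtCoef Kf p.1 ∘ₗ sqrtCoef Kf p.2 = Kf n := by
  rcases n with _ | _ | n
  · simp [Finset.Nat.antidiagonal_zero, sqrtCoef_zero, hK0]
  · rw [Finset.Nat.sum_antidiagonal_eq_sum_range_succ_mk]
    rw [Finset.sum_range_succ, Finset.sum_range_one]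
    norm_num
    rw [sqrtCoef_zero]
    show LinearMap.id ∘ₗ sqrtCoef Kf 1 + sqrtCoef Kf 1 ∘ₗ LinearMap.id = Kf 1
    rw [LinearMap.id_comp, LinearMap.comp_id]
    simp only [sqrtCoef]
    module
  · rw [Finset.Nat.sum_antidiagonal_eq_sum_range_succ_mk,
      Finset.sum_range_succ, Finset.sum_range_succ']
    have hmid : ∑ k ∈ Finset.range (n + 1),
          sqrtCoef Kf (k + 1) ∘ₗ sqrtCoef Kf (n + 2 - (k + 1))
        = ∑ m ∈ Finset.Ioo 0 (n + 2), sqrtCoef Kf m ∘ₗ sqrtCoef Kf (n + 2 - m) := by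
      refine Finset.sum_nbij' (fun k => k + 1) (fun m => m - 1) ?_ ?_ ?_ ?_ ?_
      · intro a ha
        simp only [Finset.mem_range] at ha
        simp only [Finset.mem_Ioo]
        omega
      · intro a ha
        simp only [Finset.mem_Ioo] at ha
        simp only [Finset.mem_range]
        omega
      · intro a _
        show a + 1 - 1 = a
        omega
      · intro a ha
        simp only [Finset.mem_Ioo] at ha
        show a - 1 + 1 = a
        omega
      · intro a _
        rfl
    have e0 : n + 2 - 0 = n + 2 := rfl
    have eN : n + 2 - (n + 2) = 0 := Nat.sub_self _
    rw [e0, eN, hmid, sqrtCoef_zero, LinearMap.id_comp, LinearMap.comp_id,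
      sqrtCoef_succ_succ]
    module

/-- Pointwise `ω`-self-adjointness of the `K_(n)` from antisymmetry of `ω̂`. -/
theorem K_pointwise_adj (Kf : ℕ → V →ₗ[ℝ] V) (ω : V →ₗ[ℝ] V →ₗ[ℝ] ℝ)
    (hωanti : ∀ x y : V, ω x y = - ω y x)
    (hhat : ∀ u v : ℕ → V,
      omegaSeries ω u (starMap Kf v) = - omegaSeries ω v (starMap Kf u)) :
    ∀ n (x y : V), ω x (Kf n y) = ω (Kf n x) y := by
  have cu : ∀ (z : V) (m : ℕ),
      starMap Kf (fun k => if k = 0 then z else 0) m = Kf m z := by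
    intro z m
    rw [starMap_apply, Finset.sum_eq_single (m, 0)]
    · simp
    · rintro ⟨i, j⟩ hmem hne
      have hj : j ≠ 0 := by
        rintro rfl
        apply hne
        simp only [Finset.HasAntidiagonal.mem_antidiagonal] at hmem
        simp [← hmem]
      simp [hj]
    · intro h; exact absurd (by simp) h
  have key : ∀ (n : ℕ) (a b : V),
      PowerSeries.coeff n (omegaSeries ω (fun k => if k = 0 then a else 0)
        (starMap Kf (fun k => if k = 0 then b else 0))) = ω a (Kf n b) := by
    intro n a b
    rw [omegaSeries, PowerSeries.coeff_mk, Finset.sum_eq_single (0, n)]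
    · rw [cu b n]; simp
    · rintro ⟨i, j⟩ hmem hne
      have hi : i ≠ 0 := by
        rintro rfl
        apply hne
        simp only [Finset.HasAntidiagonal.mem_antidiagonal] at hmem
        simp [← hmem]
      simp [hi]
    · intro h; exact absurd (by simp) h
  intro n x y
  have h := congrArg (PowerSeries.coeff n)
    (hhat (fun k => if k = 0 then x else 0) (fun k => if k = 0 then y else 0))
  rw [map_neg, key n x y, key n y x] at h
  rw [h, hωanti y (Kf n x), neg_neg]

/-- Pointwise `ω`-self-adjointness of the `S_(n)`. -/
theorem S_pointwise_adj (Kf : ℕ → V →ₗ[ℝ] V) (ω : V →ₗ[ℝ] V →ₗ[ℝ] ℝ)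
    (hKadj : ∀ n (x y : V), ω x (Kf n y) = ω (Kf n x) y) :
    ∀ n (x y : V), ω x (sqrtCoef Kf n y) = ω (sqrtCoef Kf n x) y := by
  intro n
  induction n using Nat.strong_induction_on with
  | _ n ih =>
    rcases n with _ | _ | n
    · intro x y; rw [sqrtCoef_zero]; rfl
    · intro x y
      show ω x (sqrtCoef Kf 1 y) = ω (sqrtCoef Kf 1 x) y
      simp only [sqrtCoef, LinearMap.smul_apply, map_smul]
      rw [hKadj 1 x y]
    · intro x y
      rw [sqrtCoef_succ_succ]
      simp only [LinearMap.smul_apply, LinearMap.sub_apply, LinearMap.sum_apply,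
        LinearMap.comp_apply, map_smul, map_sub, map_sum, LinearMap.smul_apply,
        LinearMap.sub_apply, LinearMap.sum_apply]
      rw [hKadj (n + 2) x y]
      have hsum : ∑ m ∈ Finset.Ioo 0 (n + 2),
            ω x (sqrtCoef Kf m (sqrtCoef Kf (n + 2 - m) y))
          = ∑ m ∈ Finset.Ioo 0 (n + 2),
            ω (sqrtCoef Kf m (sqrtCoef Kf (n + 2 - m) x)) y := by
        have step : ∀ m ∈ Finset.Ioo 0 (n + 2),
            ω x (sqrtCoef Kf m (sqrtCoef Kf (n + 2 - m) y))
              = ω (sqrtCoef Kf (n + 2 - m) (sqrtCoef Kf m x)) y := by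
          intro m hm
          simp only [Finset.mem_Ioo] at hm
          rw [ih m (by omega) x (sqrtCoef Kf (n + 2 - m) y),
            ih (n + 2 - m) (by omega) (sqrtCoef Kf m x) y]
        rw [Finset.sum_congr rfl step]
        refine Finset.sum_nbij' (fun m => n + 2 - m) (fun m => n + 2 - m)
          ?_ ?_ ?_ ?_ ?_ <;>
          intro a ha <;> simp only [Finset.mem_Ioo] at ha ⊢
        · omega
        · omega
        · omega
        · omega
        · have e : n + 2 - (n + 2 - a) = a := by omega
          rw [e]
      rw [hsum]

/-- Series-level self-adjointness of `𝐒`. -/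
theorem S_series_adj (Kf : ℕ → V →ₗ[ℝ] V) (ω : V →ₗ[ℝ] V →ₗ[ℝ] ℝ)
    (hSadj : ∀ n (x y : V), ω x (sqrtCoef Kf n y) = ω (sqrtCoef Kf n x) y)
    (u v : ℕ → V) :
    omegaSeries ω u (starMap (sqrtCoef Kf) v)
      = omegaSeries ω (starMap (sqrtCoef Kf) u) v := by
  apply PowerSeries.ext
  intro n
  rw [omegaSeries, omegaSeries, PowerSeries.coeff_mk, PowerSeries.coeff_mk]
  calc ∑ p ∈ antidiagonal n, ω (u p.1) (starMap (sqrtCoef Kf) v p.2)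
      = ∑ p ∈ antidiagonal n, ∑ q ∈ antidiagonal p.2,
          ω (sqrtCoef Kf q.1 (u p.1)) (v q.2) := by
        refine Finset.sum_congr rfl fun p _ => ?_
        rw [starMap_apply, map_sum]
        exact Finset.sum_congr rfl fun q _ => hSadj q.1 (u p.1) (v q.2)
    _ = ∑ p ∈ antidiagonal n, ∑ q ∈ antidiagonal p.1,
          ω (sqrtCoef Kf q.2 (u q.1)) (v p.2) :=
        sum_ad_assoc n fun a b c => ω (sqrtCoef Kf b (u a)) (v c)
    _ = ∑ p ∈ antidiagonal n, ∑ q ∈ antidiagonal p.1,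
          ω (sqrtCoef Kf q.1 (u q.2)) (v p.2) := by
        refine Finset.sum_congr rfl fun p _ => ?_
        exact sum_ad_swap2 p.1 fun a b => ω (sqrtCoef Kf b (u a)) (v p.2)
    _ = ∑ p ∈ antidiagonal n, ω (starMap (sqrtCoef Kf) u p.1) (v p.2) := by
        refine Finset.sum_congr rfl fun p _ => ?_
        rw [starMap_apply, map_sum, LinearMap.sum_apply]

/-- the recursively defined map `𝐒 = Σ λⁿ S_(n)` is invertible as an
`ℝ[[λ]]`-linear endomorphism of `V[[λ]]` and satisfies `ω(𝐒(φ), 𝐒(ψ)) = ω̂(φ, ψ)`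
(where `ω̂(φ, ψ) := ω(φ, K(ψ))`); in particular `𝐒` is a symplectic map from
`(V[[λ]], ω̂)` to `(V[[λ]], ω)`. -/
theorem statement_7
    (Kf : ℕ → V →ₗ[ℝ] V) (hK0 : Kf 0 = LinearMap.id)
    (ω : V →ₗ[ℝ] V →ₗ[ℝ] ℝ)
    (hωanti : ∀ x y : V, ω x y = - ω y x)
    -- the deformed form `ω̂(φ, ψ) = ω(φ, K(ψ))` is antisymmetric
    (hhat : ∀ u v : ℕ → V,
      omegaSeries ω u (starMap Kf v) = - omegaSeries ω v (starMap Kf u)) :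
    (∃ T : (ℕ → V) →ₗ[PowerSeries ℝ] (ℕ → V),
      starMap (sqrtCoef Kf) ∘ₗ T = LinearMap.id ∧
      T ∘ₗ starMap (sqrtCoef Kf) = LinearMap.id) ∧
    (∀ u v : ℕ → V,
      omegaSeries ω (starMap (sqrtCoef Kf) u) (starMap (sqrtCoef Kf) v)
        = omegaSeries ω u (starMap Kf v)) := by
  constructor
  · obtain ⟨h1, h2⟩ := starMap_inverses (sqrtCoef Kf) (sqrtCoef_zero Kf)
    exact ⟨starMap (invR (sqrtCoef Kf)), h1, h2⟩
  · intro u v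
    have hKadj := K_pointwise_adj Kf ω hωanti hhat
    have hSadj := S_pointwise_adj Kf ω hKadj
    have hSS : starMap (sqrtCoef Kf) ∘ₗ starMap (sqrtCoef Kf) = starMap Kf := by
      rw [starMap_comp]
      congr 1
      funext n
      exact sq_conv Kf hK0 n
    calc omegaSeries ω (starMap (sqrtCoef Kf) u) (starMap (sqrtCoef Kf) v)
        = omegaSeries ω u (starMap (sqrtCoef Kf) (starMap (sqrtCoef Kf) v)) :=
          (S_series_adj Kf ω hSadj u (starMap (sqrtCoef Kf) v)).symm
      _ = omegaSeries ω u (starMap Kf v) := by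
          rw [← LinearMap.comp_apply, hSS]


end NCQFT
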